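/- Let u, w be real numbers with u + w > 0, and define η : ℝ × ℝ → ℝ by η(x, τ) = 2(u + w) · (cosh(√((3/2)(u + w)) · (x − u·τ)))⁻². Then for every (x, τ) ∈ ℝ × ℝ, η satisfies the geophysical Korteweg–de Vries equation ∂η/∂τ − w·∂η/∂x + (3/2)·η·∂η/∂x + (1/6)·∂³η/∂x³ = 0. -/

import Mathlib

private lemma cosh_ne (z : ℝ) : Real.cosh z ≠ 0 := (Real.cosh_pos z).ne'

private lemma dF0 (c z : ℝ) :
    HasDerivAt (fun z => 2*c*((Real.cosh z)^2)⁻¹)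
      (-4*c*Real.sinh z*((Real.cosh z)^3)⁻¹) z := by
  have h := (((Real.hasDerivAt_cosh z).pow 2).inv (pow_ne_zero 2 (cosh_ne z))).const_mul (2*c)
  refine h.congr_deriv ?_
  simp only [Pi.pow_apply, Pi.inv_apply]
  field_simp
  ring

private lemma dF1 (c z : ℝ) :
    HasDerivAt (fun z => -4*c*Real.sinh z*((Real.cosh z)^3)⁻¹)
      (-4*c*(3*((Real.cosh z)^4)⁻¹ - 2*((Real.cosh z)^2)⁻¹)) z := by
  have hs := (Real.hasDerivAt_sinh z).const_mul (-4*c)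
  have hc := ((Real.hasDerivAt_cosh z).pow 3).inv (pow_ne_zero 3 (cosh_ne z))
  have h := hs.mul hc
  refine h.congr_deriv ?_
  simp only [Pi.pow_apply, Pi.inv_apply]
  have h2 : Real.sinh z ^ 2 = Real.cosh z ^ 2 - 1 := Real.sinh_sq z
  field_simp
  linear_combination (3*c*Real.cosh z^2) * h2

private lemma dF2 (c z : ℝ) :
    HasDerivAt (fun z => -4*c*(3*((Real.cosh z)^4)⁻¹ - 2*((Real.cosh z)^2)⁻¹))
      (16*c*Real.sinh z*(3*((Real.cosh z)^5)⁻¹ - ((Real.cosh z)^3)⁻¹)) z := by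
  have h4 := (((Real.hasDerivAt_cosh z).pow 4).inv (pow_ne_zero 4 (cosh_ne z))).const_mul (3:ℝ)
  have h2 := (((Real.hasDerivAt_cosh z).pow 2).inv (pow_ne_zero 2 (cosh_ne z))).const_mul (2:ℝ)
  have h := (h4.sub h2).const_mul (-4*c)
  refine h.congr_deriv ?_
  simp only [Pi.pow_apply, Pi.inv_apply]
  field_simp
  ring

/-- The solitary-wave profile `η(x, τ) = 2(u+w) · sech²(√((3/2)(u+w)) · (x − uτ))`
satisfies the geophysical KdV equation
`η_τ − w·η_x + (3/2)·η·η_x + (1/6)·η_xxx = 0` at every point. -/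
theorem gkdv_solitary_wave_solution (u w : ℝ) (huw : 0 < u + w)
    (η : ℝ → ℝ → ℝ)
    (hη : ∀ x τ : ℝ, η x τ =
      2 * (u + w) * ((Real.cosh (Real.sqrt (3 / 2 * (u + w)) * (x - u * τ))) ^ 2)⁻¹) :
    ∀ x τ : ℝ,
      deriv (fun t => η x t) τ
        - w * deriv (fun y => η y τ) x
        + 3 / 2 * η x τ * deriv (fun y => η y τ) x
        + 1 / 6 * iteratedDeriv 3 (fun y => η y τ) x = 0 := by
  intro x τ
  set c : ℝ := u + w with hc
  set k : ℝ := Real.sqrt (3 / 2 * (u + w)) with hkdef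
  have hk2 : k * k = 3 / 2 * c := Real.mul_self_sqrt (by linarith)
  -- inner affine maps
  have hinner : ∀ y : ℝ, HasDerivAt (fun y : ℝ => k * (y - u * τ)) k y := by
    intro y
    simpa using ((hasDerivAt_id y).sub_const (u * τ)).const_mul k
  have hinnerτ : HasDerivAt (fun t : ℝ => k * (x - u * t)) (-(k * u)) τ := by
    have := ((hasDerivAt_const τ x).sub ((hasDerivAt_id τ).const_mul u)).const_mul k
    simpa using this
  -- abbreviations
  set S : ℝ → ℝ := fun y => Real.sinh (k * (y - u * τ)) with hS
  set C : ℝ → ℝ := fun y => Real.cosh (k * (y - u * τ)) with hC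
  -- the x-slice equals the composed profile
  have hfun : (fun y => η y τ) = fun y => 2 * c * ((C y) ^ 2)⁻¹ := by
    funext y
    simp only [hη y τ, hC, hc, hkdef]
  -- first x-derivative
  have D1 : ∀ y : ℝ, HasDerivAt (fun y => η y τ)
      (-4*c*S y*((C y)^3)⁻¹ * k) y := by
    intro y
    rw [hfun]
    have := (dF0 c (k * (y - u * τ))).comp y (hinner y)
    simpa [Function.comp_def] using this
  have E1 : deriv (fun y => η y τ) = fun y => -4*c*S y*((C y)^3)⁻¹ * k :=
    funext fun y => (D1 y).deriv
  -- second x-derivative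
  have D2 : ∀ y : ℝ, HasDerivAt (fun y => -4*c*S y*((C y)^3)⁻¹ * k)
      (-4*c*(3*((C y)^4)⁻¹ - 2*((C y)^2)⁻¹) * k * k) y := by
    intro y
    have := ((dF1 c (k * (y - u * τ))).comp y (hinner y)).mul_const k
    simpa [Function.comp, mul_assoc] using this
  have E2 : deriv (fun y => -4*c*S y*((C y)^3)⁻¹ * k)
      = fun y => -4*c*(3*((C y)^4)⁻¹ - 2*((C y)^2)⁻¹) * k * k :=
    funext fun y => (D2 y).deriv
  -- third x-derivative
  have D3 : HasDerivAt (fun y => -4*c*(3*((C y)^4)⁻¹ - 2*((C y)^2)⁻¹) * k * k)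
      (16*c*S x*(3*((C x)^5)⁻¹ - ((C x)^3)⁻¹) * k * k * k) x := by
    have := (((dF2 c (k * (x - u * τ))).comp x (hinner x)).mul_const k).mul_const k
    simpa [Function.comp, mul_assoc] using this
  -- τ-derivative
  have Dτ : HasDerivAt (fun t => η x t)
      (-4*c*Real.sinh (k*(x - u*τ))*((Real.cosh (k*(x - u*τ)))^3)⁻¹ * (-(k*u))) τ := by
    have hfunτ : (fun t => η x t) = fun t => 2 * c * ((Real.cosh (k * (x - u * t))) ^ 2)⁻¹ := by
      funext t
      simp only [hη x t, hc, hkdef]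
    rw [hfunτ]
    have := (dF0 c (k * (x - u * τ))).comp τ hinnerτ
    simpa [Function.comp_def] using this
  -- assemble
  have h3 : iteratedDeriv 3 (fun y => η y τ) x
      = 16*c*S x*(3*((C x)^5)⁻¹ - ((C x)^3)⁻¹) * k * k * k := by
    rw [show iteratedDeriv 3 (fun y => η y τ) = deriv (iteratedDeriv 2 (fun y => η y τ)) from
        iteratedDeriv_succ,
      show iteratedDeriv 2 (fun y => η y τ) = deriv (iteratedDeriv 1 (fun y => η y τ)) from
        iteratedDeriv_succ, iteratedDeriv_one, E1, E2]
    exact D3.deriv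
  rw [Dτ.deriv, E1, h3, hη x τ]
  have hSC : S x = Real.sinh (k * (x - u * τ)) := rfl
  have hCC : C x = Real.cosh (k * (x - u * τ)) := rfl
  have hCne : Real.cosh (k * (x - u * τ)) ≠ 0 := cosh_ne _
  simp only [hSC, hCC]
  set Cv := Real.cosh (k * (x - u * τ)) with hCv
  set Sv := Real.sinh (k * (x - u * τ)) with hSv
  linear_combination (4*c*k*Sv*((Cv^3)⁻¹)) * hc.symm
    + ((8/3)*c*Sv*(3*(Cv^5)⁻¹ - (Cv^3)⁻¹)*k) * hk2
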